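/- arXiv:2511.08831 — 2 statements merged into one kernel-verified Lean document; each statement's English description precedes it below -/
import Mathlib

section
/- If V : ℝⁿ → ℝ is continuously differentiable, V(0) = 0, V(x) > 0 for all x ≠ 0 in an open neighborhood U of 0, and the derivative of V along every solution of ẋ = f(x) is strictly negative on U \ {0} (i.e. ⟨∇V(x), f(x)⟩ < 0 for all x ∈ U, x ≠ 0), with f locally Lipschitz and f(0) = 0, then the origin is an asymptotically stable equilibrium of ẋ = f(x). -/
/-!
`V` decreases along solutions. A solution starting where `V` is smaller than its minimum on the
sphere of radius `r` can therefore never reach that sphere, which gives stability. On an annulus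
`ρ ≤ ‖y‖ ≤ r` the rate `⟪∇V, f⟫` is at most some `-k < 0`, so a solution staying in the annulus
would satisfy `V (x t) ≤ V (x 0) - k t`; hence `V (x t) → 0`, and since `V` has a positive lower
bound on every annulus, `x t → 0`.
-/

open scoped RealInnerProductSpace Topology
open Filter Metric Set

theorem ContinuousOn.exists_first_hitting {g : ℝ → ℝ} {a b r : ℝ} (hab : a ≤ b)
    (hg : ContinuousOn g (Icc a b)) (ha : g a < r) (hb : r ≤ g b) :
    ∃ T ∈ Icc a b, g T = r ∧ ∀ s ∈ Ico a T, g s < r := by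
  have hS : IsCompact (Icc a b ∩ g ⁻¹' Ici r) :=
    isCompact_Icc.of_isClosed_subset
      (hg.preimage_isClosed_of_isClosed isClosed_Icc isClosed_Ici) inter_subset_left
  obtain ⟨T, ⟨hT, hrT⟩, hTmin⟩ := hS.exists_isLeast ⟨b, ⟨hab, le_rfl⟩, hb⟩
  have hbefore : ∀ s ∈ Ico a T, g s < r := fun s hs =>
    not_le.1 fun hrs => (hTmin ⟨⟨hs.1, hs.2.le.trans hT.2⟩, hrs⟩).not_gt hs.2
  obtain ⟨c, hc, hgc⟩ : r ∈ g '' Icc a T :=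
    intermediate_value_Icc hT.1 (hg.mono (Icc_subset_Icc_right hT.2)) ⟨ha.le, hrT⟩
  have hcT : c = T := le_antisymm hc.2 (hTmin ⟨⟨hc.1, hc.2.trans hT.2⟩, hgc.ge⟩)
  exact ⟨T, hT, hcT ▸ hgc, hbefore⟩

section Annulus

variable {E : Type*} [NormedAddCommGroup E]

theorem exists_pos_forall_norm_lt_imp_lt {V : E → ℝ} (hV : ContinuousAt V 0) (hV0 : V 0 = 0)
    {m : ℝ} (hm : 0 < m) : ∃ δ > 0, ∀ y : E, ‖y‖ < δ → V y < m := by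
  rw [← hV0] at hm
  simpa only [dist_zero_right] using Metric.eventually_nhds_iff.1 (hV.eventually (gt_mem_nhds hm))

variable [ProperSpace E]

theorem exists_pos_le_of_closedBall_diff_ball {g : E → ℝ} (hg : Continuous g) {U : Set E}
    (hpos : ∀ y ∈ U, y ≠ 0 → 0 < g y) {ρ r : ℝ} (hρ : 0 < ρ) (hrU : closedBall 0 r ⊆ U) :
    ∃ m > 0, ∀ y, ρ ≤ ‖y‖ → ‖y‖ ≤ r → m ≤ g y := by
  obtain ⟨m, hm, hmg⟩ := ((isCompact_closedBall 0 r).diff isOpen_ball).exists_forall_le'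
    hg.continuousOn fun y hy => hpos y (hrU hy.1) (by rintro rfl; exact hy.2 (mem_ball_self hρ))
  exact ⟨m, hm, fun y hρy hyr =>
    hmg y ⟨mem_closedBall_zero_iff.2 hyr, fun h => (mem_ball_zero_iff.1 h).not_ge hρy⟩⟩

theorem tendsto_zero_of_tendsto_comp {V : E → ℝ} (hV : Continuous V) {U : Set E}
    (hV_pos : ∀ y ∈ U, y ≠ 0 → 0 < V y) {r : ℝ} (hrU : closedBall 0 r ⊆ U)
    {α : Type*} {l : Filter α} {x : α → E} (hxr : ∀ᶠ t in l, ‖x t‖ ≤ r)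
    (hVx : Tendsto (fun t => V (x t)) l (𝓝 0)) : Tendsto x l (𝓝 0) := by
  refine Metric.tendsto_nhds.2 fun ε hε => ?_
  obtain ⟨m, hm, hmV⟩ := exists_pos_le_of_closedBall_diff_ball hV hV_pos hε hrU
  filter_upwards [hxr, hVx.eventually (gt_mem_nhds hm)] with t hxt hVxt
  rw [dist_zero_right]
  by_contra! h
  exact (hmV _ h hxt).not_gt hVxt

end Annulus

section Lyapunov

variable {E : Type*} [NormedAddCommGroup E] [InnerProductSpace ℝ E] {f : E → E} {V : E → ℝ}
  {x : ℝ → E}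

section Complete

variable [CompleteSpace E]

theorem ContDiff.continuous_gradient (hV : ContDiff ℝ 1 V) : Continuous (gradient V) :=
  (InnerProductSpace.toDual ℝ E).symm.continuous.comp (hV.continuous_fderiv one_ne_zero)

theorem DifferentiableAt.hasDerivAt_comp {t : ℝ} {v : E} (hV : DifferentiableAt ℝ V (x t))
    (hx : HasDerivAt x v t) : HasDerivAt (fun s => V (x s)) ⟪gradient V (x t), v⟫ t := by
  simpa only [inner_gradient_left, Function.comp_def] using hV.hasFDerivAt.comp_hasDerivAt t hx

theorem antitoneOn_comp_add_mul_of_inner_gradient_le {S : Set ℝ} (hS : Convex ℝ S)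
    (hV : Differentiable ℝ V) (hx : ∀ t, HasDerivAt x (f (x t)) t) {k : ℝ}
    (hk : ∀ t ∈ interior S, ⟪gradient V (x t), f (x t)⟫ ≤ -k) :
    AntitoneOn (fun t => V (x t) + k * t) S := by
  have hderiv (t : ℝ) :
      HasDerivAt (fun s => V (x s) + k * s) (⟪gradient V (x t), f (x t)⟫ + k * 1) t :=
    ((hV (x t)).hasDerivAt_comp (hx t)).add ((hasDerivAt_id t).const_mul k)
  refine antitoneOn_of_hasDerivWithinAt_nonpos hS
    (fun t _ => (hderiv t).continuousAt.continuousWithinAt)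
    (fun t _ => (hderiv t).hasDerivWithinAt) fun t ht => ?_
  linarith [hk t ht]

end Complete

variable [ProperSpace E]

theorem exists_forall_norm_lt_of_lyapunov (hV : Differentiable ℝ V) (hV0 : V 0 = 0) {U : Set E}
    (hV_pos : ∀ y ∈ U, y ≠ 0 → 0 < V y) (hV_dec : ∀ y ∈ U, ⟪gradient V y, f y⟫ ≤ 0)
    {r : ℝ} (hr : 0 < r) (hrU : closedBall 0 r ⊆ U) :
    ∃ δ > 0, ∀ x : ℝ → E, (∀ t, HasDerivAt x (f (x t)) t) → ‖x 0‖ < δ →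
      ∀ t ≥ 0, ‖x t‖ < r := by
  obtain ⟨m, hm, hmV⟩ := exists_pos_le_of_closedBall_diff_ball hV.continuous hV_pos hr hrU
  obtain ⟨δ, hδ, hδV⟩ := exists_pos_forall_norm_lt_imp_lt hV.continuous.continuousAt hV0 hm
  refine ⟨min δ r, lt_min hδ hr, fun x hx hx0 t ht => ?_⟩
  by_contra! hrt
  have hxc : Continuous x := continuous_iff_continuousAt.2 fun s => (hx s).continuousAt
  obtain ⟨T, hT, hxT, hbefore⟩ := hxc.norm.continuousOn.exists_first_hitting ht
    (hx0.trans_le (min_le_right _ _)) hrt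
  have hxU : ∀ s ∈ Icc 0 T, x s ∈ U := by
    refine fun s hs => hrU (mem_closedBall_zero_iff.2 ?_)
    rcases hs.2.lt_or_eq with hsT | rfl
    exacts [(hbefore s ⟨hs.1, hsT⟩).le, hxT.le]
  have hanti := antitoneOn_comp_add_mul_of_inner_gradient_le (k := 0) (convex_Icc 0 T) hV hx
    fun s hs => by simpa using hV_dec _ (hxU s (interior_subset hs))
  have hVT : V (x T) ≤ V (x 0) := by
    simpa using hanti (left_mem_Icc.2 hT.1) (right_mem_Icc.2 hT.1) hT.1
  linarith [hmV (x T) hxT.ge hxT.le, hδV (x 0) (hx0.trans_le (min_le_left _ _))]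

theorem exists_lyapunov_lt (hV : ContDiff ℝ 1 V) (hf : Continuous f) (hV0 : V 0 = 0)
    {U : Set E} (hV_dec : ∀ y ∈ U, y ≠ 0 → ⟪gradient V y, f y⟫ < 0) {r : ℝ}
    (hrU : closedBall 0 r ⊆ U) (hx : ∀ t, HasDerivAt x (f (x t)) t)
    (hxr : ∀ t ≥ 0, ‖x t‖ ≤ r) {b : ℝ} (hb : 0 < b) : ∃ t ≥ 0, V (x t) < b := by
  by_contra! hbV
  obtain ⟨ρ, hρ, hρV⟩ := exists_pos_forall_norm_lt_imp_lt hV.continuous.continuousAt hV0 hb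
  obtain ⟨k, hk, hkW⟩ := exists_pos_le_of_closedBall_diff_ball
    (g := fun y => -⟪gradient V y, f y⟫) (hV.continuous_gradient.inner hf).neg
    (fun y hy hy0 => neg_pos.2 (hV_dec y hy hy0)) hρ hrU
  have hanti := antitoneOn_comp_add_mul_of_inner_gradient_le (k := k) (convex_Ici 0)
    (hV.differentiable one_ne_zero) hx fun t ht => by
      have ht : 0 ≤ t := interior_subset ht
      have hρx : ρ ≤ ‖x t‖ := not_lt.1 fun h => (hρV _ h).not_ge (hbV t ht)
      linarith [hkW (x t) hρx (hxr t ht)]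
  have hT : 0 ≤ V (x 0) / k := div_nonneg (hb.le.trans (hbV 0 le_rfl)) hk.le
  have hdecay : V (x (V (x 0) / k)) + k * (V (x 0) / k) ≤ V (x 0) + k * 0 :=
    hanti self_mem_Ici hT hT
  rw [mul_div_cancel₀ _ hk.ne'] at hdecay
  linarith [hbV _ hT]

theorem tendsto_lyapunov_atTop_zero (hV : ContDiff ℝ 1 V) (hf : Continuous f) (hV0 : V 0 = 0)
    {U : Set E} (hV_nonneg : ∀ y ∈ U, 0 ≤ V y) (hV_dec' : ∀ y ∈ U, ⟪gradient V y, f y⟫ ≤ 0)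
    (hV_dec : ∀ y ∈ U, y ≠ 0 → ⟪gradient V y, f y⟫ < 0) {r : ℝ} (hrU : closedBall 0 r ⊆ U)
    (hx : ∀ t, HasDerivAt x (f (x t)) t) (hxr : ∀ t ≥ 0, ‖x t‖ ≤ r) :
    Tendsto (fun t => V (x t)) atTop (𝓝 0) := by
  have hxU (t : ℝ) (ht : 0 ≤ t) : x t ∈ U := hrU (mem_closedBall_zero_iff.2 (hxr t ht))
  have hanti : AntitoneOn (fun t => V (x t)) (Ici 0) := by
    simpa using antitoneOn_comp_add_mul_of_inner_gradient_le (k := 0) (convex_Ici 0)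
      (hV.differentiable one_ne_zero) hx fun t ht => by
        simpa using hV_dec' _ (hxU t (interior_subset ht))
  refine tendsto_order.2 ⟨fun a ha => eventually_atTop.2 ⟨0, fun t ht =>
    ha.trans_le (hV_nonneg _ (hxU t ht))⟩, fun b hb => ?_⟩
  obtain ⟨t₀, ht₀, hVt₀⟩ := exists_lyapunov_lt hV hf hV0 hV_dec hrU hx hxr hb
  exact eventually_atTop.2 ⟨t₀, fun t ht => (hanti ht₀ (ht₀.trans ht) ht).trans_lt hVt₀⟩

end Lyapunov

/-- Lyapunov's direct method: if `V` is a strict Lyapunov function on a neighborhood `U`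
of the origin, then the origin is an asymptotically stable equilibrium of `ẋ = f x`. -/
theorem lyapunov_asymptotic_stability
    {n : ℕ} (f : EuclideanSpace ℝ (Fin n) → EuclideanSpace ℝ (Fin n))
    (V : EuclideanSpace ℝ (Fin n) → ℝ)
    (hf_lip : LocallyLipschitz f) (hf0 : f 0 = 0)
    (U : Set (EuclideanSpace ℝ (Fin n))) (hU_open : IsOpen U) (hU0 : (0 : EuclideanSpace ℝ (Fin n)) ∈ U)
    (hV_smooth : ContDiff ℝ 1 V) (hV0 : V 0 = 0)
    (hV_pos : ∀ x ∈ U, x ≠ 0 → 0 < V x)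
    (hV_dec : ∀ x ∈ U, x ≠ 0 → ⟪gradient V x, f x⟫ < 0) :
    (∀ ε > 0, ∃ δ > 0, ∀ x : ℝ → EuclideanSpace ℝ (Fin n),
        (∀ t, HasDerivAt x (f (x t)) t) → ‖x 0‖ < δ → ∀ t ≥ 0, ‖x t‖ < ε) ∧
    (∃ δ > 0, ∀ x : ℝ → EuclideanSpace ℝ (Fin n),
        (∀ t, HasDerivAt x (f (x t)) t) → ‖x 0‖ < δ →
        Tendsto x atTop (nhds 0)) := by
  obtain ⟨r, hr, hrU⟩ := nhds_basis_closedBall.mem_iff.1 (hU_open.mem_nhds hU0)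
  have hV_nonneg : ∀ y ∈ U, 0 ≤ V y := fun y hy => by
    rcases eq_or_ne y 0 with rfl | hy0
    exacts [hV0.ge, (hV_pos y hy hy0).le]
  have hV_dec' : ∀ y ∈ U, ⟪gradient V y, f y⟫ ≤ 0 := fun y hy => by
    rcases eq_or_ne y 0 with rfl | hy0
    exacts [by simp [hf0], (hV_dec y hy hy0).le]
  have hV_diff := hV_smooth.differentiable one_ne_zero
  refine ⟨fun ε hε => ?_, ?_⟩
  · obtain ⟨δ, hδ, hδx⟩ := exists_forall_norm_lt_of_lyapunov hV_diff hV0 hV_pos hV_dec'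
      (lt_min hr hε) ((closedBall_subset_closedBall (min_le_left _ _)).trans hrU)
    exact ⟨δ, hδ, fun x hx hx0 t ht => (hδx x hx hx0 t ht).trans_le (min_le_right _ _)⟩
  · obtain ⟨δ, hδ, hδx⟩ := exists_forall_norm_lt_of_lyapunov hV_diff hV0 hV_pos hV_dec' hr hrU
    refine ⟨δ, hδ, fun x hx hx0 => ?_⟩
    have hxr : ∀ t ≥ 0, ‖x t‖ ≤ r := fun t ht => (hδx x hx hx0 t ht).le
    exact tendsto_zero_of_tendsto_comp hV_smooth.continuous hV_pos hrU
      (eventually_atTop.2 ⟨0, hxr⟩) (tendsto_lyapunov_atTop_zero hV_smooth hf_lip.continuous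
        hV0 hV_nonneg hV_dec' hV_dec hrU hx hxr)
end

section
/- Suppose V : ℝⁿ → ℝ satisfies the hypotheses of Zubov's theorem on an open set D containing the origin: V is continuously differentiable, V(0) = 0, 0 < V(x) < 1 for all x ∈ D \ {0}, ⟨∇V(x), f(x)⟩ = −h(x)(1 − V(x)) with h continuous, h(0) = 0, h > 0 away from 0, and V(x) → 1 as x → ∂D. Then D is positively invariant for ẋ = f(x): every solution starting in D remains in D for all forward times in its interval of existence. -/
/-! Along a solution that stays in `D`, `W = V ∘ x` satisfies `Ẇ = -h(x)(1 - W) ≤ 0`, so `W`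
never exceeds `W(0) < 1`. At a first exit time `τ` the point `x τ` would lie on `∂D`, forcing
`W(s) → 1` as `s ↑ τ`, which is impossible. -/

open scoped RealInnerProductSpace
open Filter Set Topology

theorem exists_first_exit_of_continuousOn {X : Type*} [TopologicalSpace X] {D : Set X}
    (hD : IsOpen D) {x : ℝ → X} {a b : ℝ} (hab : a ≤ b) (hx : ContinuousOn x (Icc a b))
    (ha : x a ∈ D) (hb : x b ∉ D) :
    ∃ τ ∈ Ioc a b, MapsTo x (Ico a τ) D ∧ x τ ∈ frontier D := by
  set S := Icc a b ∩ x ⁻¹' Dᶜ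
  have hS : IsCompact S :=
    isCompact_Icc.of_isClosed_subset
      (hx.preimage_isClosed_of_isClosed isClosed_Icc hD.isClosed_compl) inter_subset_left
  obtain ⟨⟨haτ, hτb⟩, hτD⟩ : sInf S ∈ S := hS.sInf_mem ⟨b, ⟨hab, le_rfl⟩, hb⟩
  have hlt : a < sInf S := lt_of_le_of_ne haτ fun h => hτD (h ▸ ha)
  have hmaps : MapsTo x (Ico a (sInf S)) D := fun s hs => by
    by_contra hsD
    exact (csInf_le hS.bddBelow ⟨⟨hs.1, hs.2.le.trans hτb⟩, hsD⟩).not_gt hs.2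
  refine ⟨sInf S, ⟨hlt, hτb⟩, hmaps, ?_⟩
  rw [hD.frontier_eq]
  refine ⟨?_, hτD⟩
  have hcont : ContinuousWithinAt x (Ico a (sInf S)) (sInf S) :=
    (hx _ ⟨haτ, hτb⟩).mono fun s hs => ⟨hs.1, hs.2.le.trans hτb⟩
  exact hcont.mem_closure (by rw [closure_Ico hlt.ne]; exact ⟨haτ, le_rfl⟩) hmaps

section Lyapunov

variable {E : Type*} [NormedAddCommGroup E] [InnerProductSpace ℝ E] [CompleteSpace E]

theorem HasGradientAt.comp_hasDerivAt {V : E → ℝ} {g x' : E} {x : ℝ → E} {t : ℝ}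
    (hV : HasGradientAt V g (x t)) (hx : HasDerivAt x x' t) :
    HasDerivAt (V ∘ x) ⟪g, x'⟫ t := by
  simpa using hV.hasFDerivAt.comp_hasDerivAt t hx

theorem antitoneOn_comp_of_inner_gradient_nonpos {V : E → ℝ} {f : E → E} {D : Set E}
    {x : ℝ → E} {a b : ℝ} (hV : Differentiable ℝ V) (hVf : ∀ y ∈ D, ⟪gradient V y, f y⟫ ≤ 0)
    (hx : ∀ t ∈ Icc a b, HasDerivAt x (f (x t)) t) (hxD : MapsTo x (Ioo a b) D) :
    AntitoneOn (V ∘ x) (Icc a b) := by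
  have hW : ∀ t ∈ Icc a b, HasDerivAt (V ∘ x) ⟪gradient V (x t), f (x t)⟫ t := fun t ht =>
    (hV (x t)).hasGradientAt.comp_hasDerivAt (hx t ht)
  rw [← interior_Icc] at hxD
  exact antitoneOn_of_hasDerivWithinAt_nonpos (convex_Icc a b)
    (fun t ht => (hW t ht).continuousAt.continuousWithinAt)
    (fun t ht => (hW t (interior_subset ht)).hasDerivWithinAt)
    (fun t ht => hVf _ (hxD ht))

end Lyapunov

theorem zubov_domain_positively_invariant_general
    {n : ℕ} (f : EuclideanSpace ℝ (Fin n) → EuclideanSpace ℝ (Fin n))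
    (V h : EuclideanSpace ℝ (Fin n) → ℝ)
    (hV_smooth : ContDiff ℝ 1 V) (hV0 : V 0 = 0)
    (D : Set (EuclideanSpace ℝ (Fin n))) (hD_open : IsOpen D)
    (hV_range : ∀ x ∈ D, x ≠ 0 → 0 < V x ∧ V x < 1)
    (hh0 : h 0 = 0) (hh_pos : ∀ x, x ≠ 0 → 0 < h x)
    (hZubov : ∀ x ∈ D, ⟪gradient V x, f x⟫ = -h x * (1 - V x))
    (hV_boundary : ∀ y ∈ frontier D, Tendsto V (nhdsWithin y D) (nhds 1)) :
    ∀ (T : ℝ) (x : ℝ → EuclideanSpace ℝ (Fin n)),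
      (∀ t ∈ Set.Ico (0 : ℝ) T, HasDerivAt x (f (x t)) t) →
      x 0 ∈ D → ∀ t ∈ Set.Ico (0 : ℝ) T, x t ∈ D := by
  intro T x hx hx0 t ht
  by_contra hxt
  have hV_lt_one : ∀ y ∈ D, V y < 1 := fun y hy => by
    rcases eq_or_ne y 0 with rfl | hy0
    · simp [hV0]
    · exact (hV_range y hy hy0).2
  have hVf : ∀ y ∈ D, ⟪gradient V y, f y⟫ ≤ 0 := fun y hy => by
    have hh_nonneg : 0 ≤ h y := by
      rcases eq_or_ne y 0 with rfl | hy0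
      · exact hh0.ge
      · exact (hh_pos y hy0).le
    rw [hZubov y hy]
    nlinarith [hV_lt_one y hy]
  have hx_Icc : ∀ {b}, b ≤ t → ∀ s ∈ Icc 0 b, HasDerivAt x (f (x s)) s :=
    fun hb s hs => hx s ⟨hs.1, hs.2.trans_lt (hb.trans_lt ht.2)⟩
  obtain ⟨τ, ⟨hτ0, hτt⟩, hmaps, hfront⟩ := exists_first_exit_of_continuousOn hD_open ht.1
    (fun s hs => (hx_Icc le_rfl s hs).continuousAt.continuousWithinAt) hx0 hxt
  have hanti : AntitoneOn (V ∘ x) (Icc 0 τ) :=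
    antitoneOn_comp_of_inner_gradient_nonpos (hV_smooth.differentiable one_ne_zero) hVf
      (hx_Icc hτt) (hmaps.mono_left Ioo_subset_Ico_self)
  have hx_in_D : ∀ᶠ s in 𝓝[<] τ, x s ∈ D :=
    mem_of_superset (Ico_mem_nhdsLT hτ0) hmaps
  have hW_tendsto : Tendsto (V ∘ x) (𝓝[<] τ) (𝓝 1) :=
    (hV_boundary _ hfront).comp <| tendsto_nhdsWithin_iff.2
      ⟨(hx_Icc hτt τ ⟨hτ0.le, le_rfl⟩).continuousAt.tendsto.mono_left nhdsWithin_le_nhds,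
        hx_in_D⟩
  have hW_le : ∀ᶠ s in 𝓝[<] τ, (V ∘ x) s ≤ V (x 0) :=
    mem_of_superset (Ico_mem_nhdsLT hτ0) fun s hs =>
      hanti ⟨le_rfl, hτ0.le⟩ ⟨hs.1, hs.2.le⟩ hs.1
  exact (le_of_tendsto hW_tendsto hW_le).not_gt (hV_lt_one _ hx0)

/-- Under the hypotheses of Zubov's theorem on an open set `D` containing the origin,
`D` is positively invariant: solutions starting in `D` remain in `D` for all forward
times in their interval of existence. -/
theorem zubov_domain_positively_invariant
    {n : ℕ} (f : EuclideanSpace ℝ (Fin n) → EuclideanSpace ℝ (Fin n))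
    (hf_lip : LocallyLipschitz f) (hf0 : f 0 = 0)
    (V h : EuclideanSpace ℝ (Fin n) → ℝ)
    (hV_smooth : ContDiff ℝ 1 V) (hV0 : V 0 = 0)
    (D : Set (EuclideanSpace ℝ (Fin n))) (hD_open : IsOpen D)
    (hD0 : (0 : EuclideanSpace ℝ (Fin n)) ∈ D)
    (hV_range : ∀ x ∈ D, x ≠ 0 → 0 < V x ∧ V x < 1)
    (hh_cont : Continuous h) (hh0 : h 0 = 0) (hh_pos : ∀ x, x ≠ 0 → 0 < h x)
    (hZubov : ∀ x ∈ D, ⟪gradient V x, f x⟫ = -h x * (1 - V x))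
    (hV_boundary : ∀ y ∈ frontier D, Tendsto V (nhdsWithin y D) (nhds 1)) :
    ∀ (T : ℝ) (x : ℝ → EuclideanSpace ℝ (Fin n)),
      (∀ t ∈ Set.Ico (0 : ℝ) T, HasDerivAt x (f (x t)) t) →
      x 0 ∈ D → ∀ t ∈ Set.Ico (0 : ℝ) T, x t ∈ D :=
  zubov_domain_positively_invariant_general f V h hV_smooth hV0 D hD_open hV_range hh0 hh_pos hZubov
    hV_boundary
end
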